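/- arXiv:1308.4182 — 3 statements merged into one kernel-verified Lean document; each statement's English description precedes it below -/
import Mathlib

section
/- Let p be a prime and k = p^e - 1 for some e ≥ 1. For nonnegative integers i, j with i + j ≤ k and (i,j) ≠ (0,0), the product of binomial coefficients C(k, i+j) · C(k+i, k) · C(k+j, k) is congruent to 0 modulo p. -/
lemma aux_dvd_choose (p e i : ℕ) (hp : p.Prime) (hi : 0 < i) (hie : i ≤ p ^ e - 1) :
    p ∣ ((p ^ e - 1) + i).choose (p ^ e - 1) := by
  haveI : Fact p.Prime := ⟨hp⟩
  have hp1 : 1 < p := hp.one_lt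
  have hpe : 1 ≤ p ^ e := Nat.one_le_pow _ _ hp.pos
  set t := padicValNat p i + 1 with ht
  -- t ≤ e
  have hvlt : p ^ padicValNat p i ≤ i := Nat.le_of_dvd hi pow_padicValNat_dvd
  have hilt : i < p ^ e := by omega
  have hte : t ≤ e := by
    by_contra h
    push_neg at h
    have : p ^ e ≤ p ^ padicValNat p i := Nat.pow_le_pow_right hp.pos (by omega)
    omega
  have hnd : ¬ p ^ t ∣ i := pow_succ_padicValNat_not_dvd hi.ne'
  have hpt : 1 ≤ p ^ t := Nat.one_le_pow _ _ hp.pos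
  -- i % p^t > 0
  have him : 0 < i % p ^ t := by
    rcases Nat.eq_zero_or_pos (i % p ^ t) with h | h
    · exact absurd (Nat.dvd_of_mod_eq_zero h) hnd
    · exact h
  -- (p^e - 1) % p^t = p^t - 1
  have hq : 1 ≤ p ^ (e - t) := Nat.one_le_pow _ _ hp.pos
  have hsplit : p ^ e - 1 = p ^ t * (p ^ (e - t) - 1) + (p ^ t - 1) := by
    have h2 : p ^ t * (p ^ (e - t) - 1) = p ^ e - p ^ t := by
      rw [Nat.mul_sub, mul_one, ← pow_add]
      congr 2
      omega
    have h3 : p ^ t ≤ p ^ e := Nat.pow_le_pow_right hp.pos hte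
    omega
  have hmod : (p ^ e - 1) % p ^ t = p ^ t - 1 := by
    rw [hsplit, Nat.mul_add_mod, Nat.mod_eq_of_lt (by omega)]
  -- Kummer: carry at digit t
  have hlog : Nat.log p ((p ^ e - 1) + i) < e + 1 := by
    apply Nat.log_lt_of_lt_pow (by omega)
    have : 2 * p ^ e ≤ p ^ (e + 1) := by
      rw [pow_succ, mul_comm]
      exact Nat.mul_le_mul_left _ hp1
    omega
  have hmul := Nat.Prime.emultiplicity_choose' (p := p) (n := p ^ e - 1) (k := i)
    (b := e + 1) hp hlog
  -- the filter set is nonempty: t belongs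
  have htmem : t ∈ Finset.filter
      (fun x => p ^ x ≤ i % p ^ x + (p ^ e - 1) % p ^ x) (Finset.Ico 1 (e + 1)) := by
    simp only [Finset.mem_filter, Finset.mem_Ico]
    refine ⟨⟨by omega, by omega⟩, ?_⟩
    rw [hmod]; omega
  have hcard : 1 ≤ (Finset.filter
      (fun x => p ^ x ≤ i % p ^ x + (p ^ e - 1) % p ^ x) (Finset.Ico 1 (e + 1))).card :=
    Finset.card_pos.2 ⟨t, htmem⟩
  have h1 : (1 : ℕ∞) ≤ emultiplicity p (((p ^ e - 1) + i).choose i) := by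
    rw [hmul]
    exact_mod_cast hcard
  have hdvd : p ∣ ((p ^ e - 1) + i).choose i := by
    have := pow_dvd_of_le_emultiplicity h1
    simpa using this
  rwa [Nat.choose_symm_add]

/-- For `k = p^e - 1` with `p` prime and `e ≥ 1`, and `i + j ≤ k`, `(i,j) ≠ (0,0)`,
the product `C(k, i+j) C(k+i, k) C(k+j, k)` is `≡ 0 mod p`. -/
theorem binom_product_zero_mod_p (p e : ℕ) (hp : p.Prime) (he : 1 ≤ e) (i j : ℕ)
    (hij : i + j ≤ p ^ e - 1) (hne : ¬(i = 0 ∧ j = 0)) :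
    (p ^ e - 1).choose (i + j) * ((p ^ e - 1) + i).choose (p ^ e - 1) *
      ((p ^ e - 1) + j).choose (p ^ e - 1) ≡ 0 [MOD p] := by
  rw [Nat.modEq_zero_iff_dvd]
  rcases Nat.eq_zero_or_pos i with hi | hi
  · have hj : 0 < j := by omega
    exact Dvd.dvd.mul_left (aux_dvd_choose p e j hp hj (by omega)) _
  · exact Dvd.dvd.mul_right
      (Dvd.dvd.mul_left (aux_dvd_choose p e i hp hi (by omega)) _) _
end

section
/- In the polynomial ring A = F[v,w,x,y,z] over a field F, let a = (vx, wx, vz - wy) be the ideal of 2×2 minors of the matrix with rows (0, v, w) and (x, y, z). Set f = wx^2 + z(vz - wy) and g = vx^2 + y(vz - wy). Then vf - wg = (vz - wy)^2, and the ideal a equals the radical of the ideal (f, g); in particular, each of vx, wx, vz - wy has a power lying in (f, g). -/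
/-!
Every generator of `a` has a power in `(f, g)`: `vf - wg = (vz - wy)²`, and
`vx² = g - y(vz - wy)`, `wx² = f - z(vz - wy)` give `(vx)⁴, (wx)⁴ ∈ (f, g)`.
Conversely `f, g ∈ a`, and `a = (v, w) ∩ (x, vz - wy)` is an intersection of two primes,
hence radical; the second ideal is prime because `vz - wy`, a primitive polynomial of
degree one in `z`, is irreducible.
-/

open MvPolynomial

noncomputable section Stmt17

namespace Stmt17

variable (F : Type*) [Field F]

/-- The indeterminates `v, w, x, y, z` of `F[v,w,x,y,z]`. -/
def v : MvPolynomial (Fin 5) F := X 0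
def w : MvPolynomial (Fin 5) F := X 1
def x : MvPolynomial (Fin 5) F := X 2
def y : MvPolynomial (Fin 5) F := X 3
def z : MvPolynomial (Fin 5) F := X 4

/-- `f = wx² + z(vz - wy)`. -/
def f : MvPolynomial (Fin 5) F := w F * (x F) ^ 2 + z F * (v F * z F - w F * y F)

/-- `g = vx² + y(vz - wy)`. -/
def g : MvPolynomial (Fin 5) F := v F * (x F) ^ 2 + y F * (v F * z F - w F * y F)

end Stmt17

namespace MvPolynomial

variable {σ R : Type*} [CommRing R]

open Classical in
noncomputable def killVars (s : Set σ) : MvPolynomial σ R →ₐ[R] MvPolynomial σ R :=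
  aeval fun i ↦ if i ∈ sᶜ then X i else 0

theorem killVars_X_of_mem {s : Set σ} {i : σ} (hi : i ∈ s) :
    killVars s (X i : MvPolynomial σ R) = 0 := by
  simp [killVars, hi]

theorem killVars_eq_self {s : Set σ} {p : MvPolynomial σ R} (hp : ↑p.vars ⊆ sᶜ) :
    killVars s p = p := by
  classical
  exact aeval_ite_mem_eq_self p hp

theorem sub_killVars_mem (s : Set σ) (p : MvPolynomial σ R) :
    p - killVars s p ∈ Ideal.span (X '' s) := by
  rw [← Ideal.Quotient.eq, ← Ideal.Quotient.mkₐ_eq_mk R, ← AlgHom.comp_apply]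
  congr 1
  refine algHom_ext fun i ↦ ?_
  by_cases hi : i ∈ s
  · simpa [killVars_X_of_mem hi, Ideal.Quotient.eq_zero_iff_mem] using
      Ideal.subset_span (Set.mem_image_of_mem X hi)
  · simp [killVars, hi]

theorem comap_killVars_le (s : Set σ) (J : Ideal (MvPolynomial σ R)) :
    J.comap (killVars s) ≤ Ideal.span (X '' s) ⊔ J := fun p hp ↦ by
  simpa using Ideal.add_mem _ (Ideal.mem_sup_left (sub_killVars_mem s p))
    (Ideal.mem_sup_right (Ideal.mem_comap.mp hp))

theorem isPrime_span_X_image [IsDomain R] (s : Set σ) :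
    (Ideal.span (X '' s : Set (MvPolynomial σ R))).IsPrime := by
  suffices Ideal.span (X '' s) = RingHom.ker (killVars s : MvPolynomial σ R →ₐ[R] _) from
    this ▸ RingHom.ker_isPrime _
  refine le_antisymm (Ideal.span_le.mpr ?_) ?_
  · rintro _ ⟨i, hi, rfl⟩
    exact killVars_X_of_mem hi
  · simpa [RingHom.ker_eq_comap_bot] using comap_killVars_le s ⊥

theorem isPrime_span_X_pair_of_prime {i : σ} {p : MvPolynomial σ R} (hp : Prime p)
    (hi : i ∉ p.vars) : (Ideal.span {X i, p}).IsPrime := by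
  suffices Ideal.span {X i, p} = (Ideal.span {p}).comap (killVars {i}) from
    this ▸ ((Ideal.span_singleton_prime hp.ne_zero).mpr hp).comap _
  refine le_antisymm (Ideal.span_le.mpr ?_) ?_
  · rintro _ (rfl | rfl)
    · simp [killVars_X_of_mem (Set.mem_singleton i)]
    · simp [killVars_eq_self (s := {i}) (by simpa using hi)]
  · simpa [Set.image_singleton, Ideal.span_insert] using comap_killVars_le {i} (Ideal.span {p})

theorem prime_X_mul_X_sub_X_mul_X [IsDomain R] [UniqueFactorizationMonoid R] {i j k l : σ}
    (hij : i ≠ j) (hik : i ≠ k) (hli : l ≠ i) (hlj : l ≠ j) (hlk : l ≠ k) :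
    Prime (X i * X l - X j * X k : MvPolynomial σ R) := by
  classical
  rw [← UniqueFactorizationMonoid.irreducible_iff_prime, sub_eq_add_neg]
  refine irreducible_mul_X_add _ _ _ (X_ne_zero i) (by simp [vars_X, hli]) ?_ ?_
  · rw [vars_neg]
    intro h
    simpa [vars_X, hlj, hlk] using vars_mul _ _ h
  · rw [(X_prime (R := R)).irreducible.isRelPrime_iff_not_dvd, dvd_neg]
    intro h
    rcases (X_prime (R := R)).dvd_or_dvd h with h | h <;> simp [X_dvd_X, hij, hik] at h

end MvPolynomial

namespace Ideal

variable {A : Type*} [CommRing A]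

theorem inf_span_pair_le_span_mul {v w x q : A} (hP : (span {v, w}).IsPrime)
    (hx : x ∉ span {v, w}) (hq : q ∈ span {v, w}) :
    span {v, w} ⊓ span {x, q} ≤ span {v * x, w * x, q} := by
  rintro p ⟨hpP, hp⟩
  obtain ⟨c, d, rfl⟩ := mem_span_pair.mp hp
  have hcx : c * x ∈ span {v, w} := by
    simpa using sub_mem hpP (mul_mem_left _ d hq)
  obtain ⟨α, β, rfl⟩ := mem_span_pair.mp ((hP.mem_or_mem hcx).resolve_right hx)
  have hv : v * x ∈ span {v * x, w * x, q} := subset_span (by simp)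
  have hw : w * x ∈ span {v * x, w * x, q} := subset_span (by simp)
  have hq' : q ∈ span {v * x, w * x, q} := subset_span (by simp)
  convert add_mem (add_mem (mul_mem_left _ α hv) (mul_mem_left _ β hw)) (mul_mem_left _ d hq')
    using 1
  ring

end Ideal

namespace Stmt17

open Ideal

variable (F : Type*) [Field F]

theorem v_mul_f_sub_w_mul_g : v F * f F - w F * g F = (v F * z F - w F * y F) ^ 2 := by
  simp only [f, g]
  ring

theorem minor_sq_mem_span_f_g : (v F * z F - w F * y F) ^ 2 ∈ span {f F, g F} :=
  v_mul_f_sub_w_mul_g F ▸ mem_span_pair.mpr ⟨v F, -w F, by ring⟩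

theorem v_mul_x_pow_four_mem_span_f_g : (v F * x F) ^ 4 ∈ span {f F, g F} := by
  have key : (v F * x F) ^ 4 = v F ^ 2 * (g F * (g F - 2 * y F * (v F * z F - w F * y F))
      + y F ^ 2 * (v F * z F - w F * y F) ^ 2) := by
    simp only [g]
    ring
  rw [key]
  exact mul_mem_left _ _ (add_mem (mul_mem_right _ _ (subset_span (by simp)))
    (mul_mem_left _ _ (minor_sq_mem_span_f_g F)))

theorem w_mul_x_pow_four_mem_span_f_g : (w F * x F) ^ 4 ∈ span {f F, g F} := by
  have key : (w F * x F) ^ 4 = w F ^ 2 * (f F * (f F - 2 * z F * (v F * z F - w F * y F))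
      + z F ^ 2 * (v F * z F - w F * y F) ^ 2) := by
    simp only [f]
    ring
  rw [key]
  exact mul_mem_left _ _ (add_mem (mul_mem_right _ _ (subset_span (by simp)))
    (mul_mem_left _ _ (minor_sq_mem_span_f_g F)))

theorem span_f_g_le_minors :
    span {f F, g F} ≤ span {v F * x F, w F * x F, v F * z F - w F * y F} := by
  have hvx : v F * x F ∈ span {v F * x F, w F * x F, v F * z F - w F * y F} :=
    subset_span (by simp)
  have hwx : w F * x F ∈ span {v F * x F, w F * x F, v F * z F - w F * y F} :=
    subset_span (by simp)
  have hq : v F * z F - w F * y F ∈ span {v F * x F, w F * x F, v F * z F - w F * y F} :=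
    subset_span (by simp)
  rw [span_le, Set.pair_subset_iff, SetLike.mem_coe, SetLike.mem_coe]
  constructor
  · convert add_mem (mul_mem_left _ (x F) hwx) (mul_mem_left _ (z F) hq) using 1
    simp only [f]
    ring
  · convert add_mem (mul_mem_left _ (x F) hvx) (mul_mem_left _ (y F) hq) using 1
    simp only [g]
    ring

theorem isPrime_span_v_w : (span {v F, w F}).IsPrime := by
  simpa [v, w, Set.image_pair] using isPrime_span_X_image (R := F) ({0, 1} : Set (Fin 5))

theorem isPrime_span_x_minor : (span {x F, v F * z F - w F * y F}).IsPrime := by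
  refine isPrime_span_X_pair_of_prime
    (prime_X_mul_X_sub_X_mul_X (by decide) (by decide) (by decide) (by decide)
      (by decide)) fun h ↦ ?_
  rcases Finset.mem_union.mp (vars_sub_subset _ h) with h | h <;>
    simpa [v, w, y, z, vars_X] using vars_mul _ _ h

theorem x_notMem_span_v_w : x F ∉ span {v F, w F} := by
  rw [v, w, x, ← Set.image_pair, mem_ideal_span_X_image]
  simp only [not_forall]
  exact ⟨Finsupp.single 2 1, by simp [support_X], by simp [Finsupp.single_apply]⟩

theorem minors_eq_inf :
    span {v F * x F, w F * x F, v F * z F - w F * y F} =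
      span {v F, w F} ⊓ span {x F, v F * z F - w F * y F} := by
  refine le_antisymm (span_le.mpr ?_) ?_
  · have hv : v F ∈ span {v F, w F} := subset_span (by simp)
    have hw : w F ∈ span {v F, w F} := subset_span (by simp)
    have hx : x F ∈ span {x F, v F * z F - w F * y F} := subset_span (by simp)
    have hq : v F * z F - w F * y F ∈ span {x F, v F * z F - w F * y F} := subset_span (by simp)
    rintro _ (rfl | rfl | rfl)
    · exact ⟨mul_mem_right _ _ hv, mul_mem_left _ _ hx⟩
    · exact ⟨mul_mem_right _ _ hw, mul_mem_left _ _ hx⟩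
    · exact ⟨sub_mem (mul_mem_right _ _ hv) (mul_mem_right _ _ hw), hq⟩
  · exact inf_span_pair_le_span_mul (isPrime_span_v_w F) (x_notMem_span_v_w F)
      (sub_mem (mul_mem_right _ _ (subset_span (by simp)))
        (mul_mem_right _ _ (subset_span (by simp))))

theorem isRadical_minors : (span {v F * x F, w F * x F, v F * z F - w F * y F}).IsRadical :=
  minors_eq_inf F ▸ (isPrime_span_v_w F).isRadical.inf (isPrime_span_x_minor F).isRadical

/-- In `A = F[v,w,x,y,z]`, for the ideal `a = (vx, wx, vz - wy)` of 2×2 minors of the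
matrix with rows `(0,v,w)` and `(x,y,z)`: one has `vf - wg = (vz - wy)²`, the ideal `a`
is the radical of `(f,g)`, and in particular each generator of `a` has a power in
`(f,g)`. -/
theorem ara_two (F : Type*) [Field F] :
    v F * f F - w F * g F = (v F * z F - w F * y F) ^ 2 ∧
    Ideal.span {v F * x F, w F * x F, v F * z F - w F * y F} =
      (Ideal.span {f F, g F} : Ideal (MvPolynomial (Fin 5) F)).radical ∧
    ∀ h ∈ ({v F * x F, w F * x F, v F * z F - w F * y F} : Set (MvPolynomial (Fin 5) F)),
      ∃ n : ℕ, h ^ n ∈ Ideal.span {f F, g F} := by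
  have hpow : ∀ h ∈ ({v F * x F, w F * x F, v F * z F - w F * y F} :
      Set (MvPolynomial (Fin 5) F)), ∃ n : ℕ, h ^ n ∈ Ideal.span {f F, g F} := by
    rintro h (rfl | rfl | rfl)
    exacts [⟨4, v_mul_x_pow_four_mem_span_f_g F⟩, ⟨4, w_mul_x_pow_four_mem_span_f_g F⟩,
      ⟨2, minor_sq_mem_span_f_g F⟩]
  refine ⟨v_mul_f_sub_w_mul_g F, le_antisymm (span_le.mpr hpow) ?_, hpow⟩
  exact (radical_mono (span_f_g_le_minors F)).trans_eq (isRadical_minors F).radical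

end Stmt17

end Stmt17
end

section
/- Let R = Z[X] be the polynomial ring in the entries of an m×n matrix of indeterminates X (with 1 ≤ t ≤ min(m,n)), localized at x_{11}. Set y_{ij} = x_{ij} - x_{i1}x_{1j}/x_{11} for 2 ≤ i ≤ m, 2 ≤ j ≤ n, and let Y = (y_{ij}). Then the map Z[Y][x_{11},...,x_{m1}, x_{12},...,x_{1n}]_{x_{11}} → R_{x_{11}} sending the y_{ij} and the first-row/first-column variables to the corresponding elements is a ring isomorphism, and under it the ideal I_t(X)R_{x_{11}} of size-t minors of X equals the ideal I_{t-1}(Y)R_{x_{11}} of size-(t-1) minors of Y. -/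
/-!
Over any commutative ring, if the corner entry `M₀₀` of a matrix `M` is a unit, subtracting
`M_{i0}/M₀₀` times row `0` from row `i` turns a minor through row `0` and column `0` into `M₀₀`
times a minor of the Schur complement `Y`. Conversely, bordering an arbitrary `t`-minor of `M` by
row `0` and column `0` and expanding along column `0` writes `M₀₀` times it as a combination of
minors through row `0`, and these lie in `I_{t-1}(Y)`. Hence `I_t(M) = I_{t-1}(Y)`. The ring map
is an isomorphism because `x_{ij} = y_{ij} + x_{i1}x_{1j}/x₁₁` gives its inverse.
-/

open MvPolynomial

noncomputable section Stmt18

namespace Stmt18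

/-- The ideal generated by the size-`t` minors of a matrix `M`. -/
def minorsIdeal {S : Type*} [CommRing S] {α β : Type*} (t : ℕ) (M : Matrix α β S) :
    Ideal S :=
  Ideal.span { d | ∃ (r : Fin t → α) (c : Fin t → β),
    d = (Matrix.of fun a b => M (r a) (c b)).det }

/-- `R = ℤ[X]` for an `(m+1) × (n+1)` matrix of indeterminates `X`. -/
abbrev R (m n : ℕ) := MvPolynomial (Fin (m + 1) × Fin (n + 1)) ℤ

/-- The generic matrix `X = (x_{ij})`. -/
def Xmat (m n : ℕ) : Matrix (Fin (m + 1)) (Fin (n + 1)) (R m n) := fun i j => X (i, j)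

/-- `R_{x₁₁}`, the localization of `R` at the entry `x₁₁`. -/
abbrev Rloc (m n : ℕ) := Localization.Away (X (0, 0) : R m n)

/-- `1/x₁₁` in `R_{x₁₁}`. -/
def xinv (m n : ℕ) : Rloc m n := IsLocalization.Away.invSelf (X (0, 0) : R m n)

/-- The `m × n` matrix `Y` with entries `y_{ij} = x_{ij} - x_{i1}x_{1j}/x_{11}` in
`R_{x₁₁}` (rows and columns of `X` indexed from `0`, so `y_{ij}` uses rows/columns
`i+1`, `j+1`). -/
def Ymat (m n : ℕ) : Matrix (Fin m) (Fin n) (Rloc m n) := fun i j =>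
  algebraMap (R m n) (Rloc m n) (X (i.succ, j.succ)) -
    algebraMap (R m n) (Rloc m n) (X (i.succ, 0)) *
      algebraMap (R m n) (Rloc m n) (X (0, j.succ)) * xinv m n

/-- Images of the generators of `ℤ[Y][x₁₁, …, x_{m1}, x₁₂, …, x₁ₙ]`: the variables
`y_{ij}` go to `x_{ij} - x_{i1}x_{1j}/x_{11}`, the first-column variables
`x_{11}, …, x_{m1}` and first-row variables `x_{12}, …, x_{1n}` go to themselves. -/
def srcGen (m n : ℕ) : (Fin m × Fin n) ⊕ (Fin (m + 1) ⊕ Fin n) → Rloc m n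
  | Sum.inl (i, j) => Ymat m n i j
  | Sum.inr (Sum.inl i) => algebraMap (R m n) (Rloc m n) (X (i, 0))
  | Sum.inr (Sum.inr j) => algebraMap (R m n) (Rloc m n) (X (0, j.succ))

/-- The homomorphism `ℤ[Y][x₁₁, …, x_{m1}, x₁₂, …, x₁ₙ] → R_{x₁₁}`. -/
def srcHom (m n : ℕ) :
    MvPolynomial ((Fin m × Fin n) ⊕ (Fin (m + 1) ⊕ Fin n)) ℤ →+* Rloc m n :=
  (MvPolynomial.aeval (srcGen m n)).toRingHom

/-- The variable `x₁₁` of the source polynomial ring. -/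
def x11src (m n : ℕ) : MvPolynomial ((Fin m × Fin n) ⊕ (Fin (m + 1) ⊕ Fin n)) ℤ :=
  X (Sum.inr (Sum.inl 0))

lemma srcHom_x11_isUnit (m n : ℕ) : IsUnit (srcHom m n (x11src m n)) := by
  have h : srcHom m n (x11src m n) =
      algebraMap (R m n) (Rloc m n) (X (0, 0)) := by
    simp [srcHom, x11src, srcGen]
  rw [h]
  exact IsLocalization.Away.algebraMap_isUnit _

/-- The induced map `ℤ[Y][x₁₁, …, x_{m1}, x₁₂, …, x₁ₙ]_{x₁₁} → R_{x₁₁}`. -/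
def Φ (m n : ℕ) : Localization.Away (x11src m n) →+* Rloc m n :=
  Localization.awayLift (srcHom m n) (x11src m n) (srcHom_x11_isUnit m n)


section Minors

variable {S T : Type*} [CommRing S] [CommRing T] {α β : Type*}

lemma det_submatrix_mem_minorsIdeal (M : Matrix α β S) {t : ℕ} (r : Fin t → α)
    (c : Fin t → β) : (M.submatrix r c).det ∈ minorsIdeal t M :=
  Ideal.subset_span ⟨r, c, rfl⟩

lemma minorsIdeal_le {M : Matrix α β S} {t : ℕ} {I : Ideal S}
    (h : ∀ (r : Fin t → α) (c : Fin t → β), (M.submatrix r c).det ∈ I) :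
    minorsIdeal t M ≤ I :=
  Ideal.span_le.mpr fun _ ⟨r, c, hd⟩ => hd ▸ h r c

lemma map_minorsIdeal (f : S →+* T) (t : ℕ) (M : Matrix α β S) :
    (minorsIdeal t M).map f = minorsIdeal t (M.map f) := by
  rw [minorsIdeal, minorsIdeal, Ideal.map_span]
  congr 1
  ext d
  constructor
  · rintro ⟨_, ⟨r, c, rfl⟩, rfl⟩
    exact ⟨r, c, RingHom.map_det f _⟩
  · rintro ⟨r, c, rfl⟩
    exact ⟨_, ⟨r, c, rfl⟩, RingHom.map_det f _⟩

lemma minorsIdeal_succ_le (M : Matrix α β S) (t : ℕ) :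
    minorsIdeal (t + 1) M ≤ minorsIdeal t M := by
  refine minorsIdeal_le fun r c => ?_
  rw [Matrix.det_succ_row_zero]
  refine Ideal.sum_mem _ fun j _ => Ideal.mul_mem_left _ _ ?_
  rw [Matrix.submatrix_submatrix]
  exact det_submatrix_mem_minorsIdeal M _ _

lemma minorsIdeal_le_of_border_eq_zero {m n : ℕ} {N : Matrix (Fin (m + 1)) (Fin (n + 1)) S}
    (hrow : ∀ j, N 0 j = 0) (hcol : ∀ i, N i 0 = 0) (t : ℕ) :
    minorsIdeal t N ≤ minorsIdeal t (N.submatrix Fin.succ Fin.succ) := by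
  refine minorsIdeal_le fun r c => ?_
  by_cases hr : ∃ a, r a = 0
  · obtain ⟨a, ha⟩ := hr
    rw [Matrix.det_eq_zero_of_row_eq_zero a fun b => by simp [ha, hrow]]
    exact zero_mem _
  by_cases hc : ∃ b, c b = 0
  · obtain ⟨b, hb⟩ := hc
    rw [Matrix.det_eq_zero_of_column_eq_zero b fun a => by simp [hb, hcol]]
    exact zero_mem _
  push Not at hr hc
  convert det_submatrix_mem_minorsIdeal _ (fun a => (r a).pred (hr a))
    (fun b => (c b).pred (hc b)) using 2
  ext a b
  simp

end Minors

section Pivot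

open Matrix

variable {S : Type*} [CommRing S] {m n : ℕ} (M : Matrix (Fin (m + 1)) (Fin (n + 1)) S) (e : S)

def pivotElim : Matrix (Fin (m + 1)) (Fin (n + 1)) S :=
  Matrix.of fun i j => M i j - M i 0 * M 0 j * e

variable {M e}

lemma pivotElim_zero_left (he : M 0 0 * e = 1) (j : Fin (n + 1)) : pivotElim M e 0 j = 0 := by
  simp only [pivotElim, Matrix.of_apply]
  linear_combination -(M 0 j) * he

lemma pivotElim_zero_right (he : M 0 0 * e = 1) (i : Fin (m + 1)) : pivotElim M e i 0 = 0 := by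
  simp only [pivotElim, Matrix.of_apply]
  linear_combination -(M i 0) * he

variable (M e)

lemma det_submatrix_vecCons_zero {k : ℕ} (ρ : Fin k → Fin (m + 1))
    (γ : Fin (k + 1) → Fin (n + 1)) :
    (M.submatrix (vecCons 0 ρ) γ).det =
      (((pivotElim M e).submatrix (vecCons 0 ρ) γ).updateRow 0 (M 0 ∘ γ)).det := by
  refine det_eq_of_forall_row_eq_smul_add_const (vecCons 0 fun a => M (ρ a) 0 * e) 0 rfl
    fun i j => Fin.cases ?_ (fun a => ?_) i
  · simp [-submatrix_cons_row]
  · simp [-submatrix_cons_row, updateRow_ne, pivotElim]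
    ring

lemma det_submatrix_vecCons_zero_mem {k : ℕ} (ρ : Fin k → Fin (m + 1))
    (γ : Fin (k + 1) → Fin (n + 1)) :
    (M.submatrix (vecCons 0 ρ) γ).det ∈ minorsIdeal k (pivotElim M e) := by
  rw [det_submatrix_vecCons_zero M e, det_succ_row_zero]
  refine Ideal.sum_mem _ fun j _ => Ideal.mul_mem_left _ _ ?_
  convert det_submatrix_mem_minorsIdeal (pivotElim M e) ρ (γ ∘ j.succAbove) using 2
  ext a b
  simp [-submatrix_cons_row, updateRow_ne]

lemma det_submatrix_vecCons_zero_vecCons_zero (he : M 0 0 * e = 1) {k : ℕ}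
    (ρ : Fin k → Fin (m + 1)) (γ : Fin k → Fin (n + 1)) :
    (M.submatrix (vecCons 0 ρ) (vecCons 0 γ)).det =
      M 0 0 * ((pivotElim M e).submatrix ρ γ).det := by
  rw [det_submatrix_vecCons_zero M e, det_succ_column_zero, Fin.sum_univ_succ]
  simp [-submatrix_cons_row, updateRow_ne, pivotElim_zero_right he]
  rfl

lemma pivot_mul_det_submatrix_mem {s : ℕ} (r : Fin (s + 1) → Fin (m + 1))
    (c : Fin (s + 1) → Fin (n + 1)) :
    M 0 0 * (M.submatrix r c).det ∈ minorsIdeal s (pivotElim M e) := by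
  -- Border the minor by row `0` and column `0` and expand along column `0`: the bordered
  -- determinant and all terms but `M 0 0 * (M.submatrix r c).det` are minors through row `0`.
  have hB := minorsIdeal_succ_le (pivotElim M e) s
    (det_submatrix_vecCons_zero_mem M e r (vecCons 0 c))
  rw [det_succ_column_zero, Fin.sum_univ_succ] at hB
  have hrest := Ideal.sum_mem (minorsIdeal s (pivotElim M e)) (t := Finset.univ)
    fun (i : Fin (s + 1)) _ => Ideal.mul_mem_left _ ((-1) ^ (i.succ : ℕ) * M (r i) 0)
      (det_submatrix_vecCons_zero_mem M e (i.removeNth r) c)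
  convert Ideal.sub_mem _ hB hrest using 1
  simp only [submatrix_submatrix, submatrix_apply, vecCons, Fin.cons_comp_succ_succAbove,
    Fin.succAbove_zero, Fin.cons_comp_succ, Fin.cons_zero, Fin.cons_succ, Fin.val_zero, pow_zero,
    one_mul, add_sub_cancel_right]

theorem minorsIdeal_succ_eq_minorsIdeal_pivotElim (he : M 0 0 * e = 1) (s : ℕ) :
    minorsIdeal (s + 1) M = minorsIdeal s ((pivotElim M e).submatrix Fin.succ Fin.succ) := by
  have cancel (x : S) : e * (M 0 0 * x) = x := by rw [← mul_assoc, mul_comm e, he, one_mul]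
  apply le_antisymm
  · refine le_trans ?_ (minorsIdeal_le_of_border_eq_zero (pivotElim_zero_left he)
      (pivotElim_zero_right he) s)
    refine minorsIdeal_le fun r c => ?_
    simpa only [cancel] using Ideal.mul_mem_left _ e (pivot_mul_det_submatrix_mem M e r c)
  · refine minorsIdeal_le fun r c => ?_
    have h := Ideal.mul_mem_left _ e
      (det_submatrix_mem_minorsIdeal M (vecCons 0 (Fin.succ ∘ r)) (vecCons 0 (Fin.succ ∘ c)))
    rwa [det_submatrix_vecCons_zero_vecCons_zero M e he, cancel] at h

end Pivot

lemma Ymat_eq_submatrix_pivotElim (m n : ℕ) :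
    Ymat m n = (pivotElim ((Xmat m n).map (algebraMap (R m n) (Rloc m n))) (xinv m n)).submatrix
      Fin.succ Fin.succ :=
  rfl

lemma map_minorsIdeal_Xmat (m n s : ℕ) :
    (minorsIdeal (s + 1) (Xmat m n)).map (algebraMap (R m n) (Rloc m n)) =
      minorsIdeal s (Ymat m n) := by
  rw [map_minorsIdeal, minorsIdeal_succ_eq_minorsIdeal_pivotElim _ (xinv m n)
    (IsLocalization.Away.mul_invSelf (S := Rloc m n) (X (0, 0))), Ymat_eq_submatrix_pivotElim]

lemma map_invSelf_eq {A B C : Type*} [CommRing A] [CommRing B] [CommRing C] [Algebra A B]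
    {x : A} [IsLocalization.Away x B] (f : B →+* C) {y : C}
    (hy : f (algebraMap A B x) * y = 1) : f (IsLocalization.Away.invSelf x) = y := by
  refine left_inv_eq_right_inv ?_ hy
  rw [mul_comm, ← map_mul, IsLocalization.Away.mul_invSelf, map_one]

section Inverse

variable (m n : ℕ)

abbrev SrcLoc := Localization.Away (x11src m n)

def srcVar (σ : (Fin m × Fin n) ⊕ (Fin (m + 1) ⊕ Fin n)) : SrcLoc m n :=
  algebraMap (MvPolynomial ((Fin m × Fin n) ⊕ (Fin (m + 1) ⊕ Fin n)) ℤ) (SrcLoc m n) (X σ)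

def invGen : Fin (m + 1) × Fin (n + 1) → SrcLoc m n
  | (i, j) => Fin.cases
      (Fin.cases (srcVar m n (.inr (.inl 0))) (fun j' => srcVar m n (.inr (.inr j'))) j)
      (fun i' => Fin.cases (srcVar m n (.inr (.inl i'.succ)))
        (fun j' => srcVar m n (.inl (i', j')) + srcVar m n (.inr (.inl i'.succ)) *
          srcVar m n (.inr (.inr j')) * IsLocalization.Away.invSelf (x11src m n)) j) i

lemma aeval_invGen_x11 :
    aeval (invGen m n) (X (0, 0) : R m n) = algebraMap _ (SrcLoc m n) (x11src m n) :=
  aeval_X _ _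

lemma aeval_invGen_x11_isUnit : IsUnit (aeval (invGen m n) (X (0, 0) : R m n)) :=
  aeval_invGen_x11 m n ▸ IsLocalization.Away.algebraMap_isUnit (x11src m n)

def Ψ : Rloc m n →+* SrcLoc m n :=
  Localization.awayLift (aeval (invGen m n)).toRingHom _ (aeval_invGen_x11_isUnit m n)

variable {m n}

@[simp]
lemma Φ_srcVar (σ) : Φ m n (srcVar m n σ) = srcGen m n σ :=
  (IsLocalization.Away.lift_eq _ (srcHom_x11_isUnit m n) _).trans (aeval_X _ _)

lemma Ψ_algebraMap (p : R m n) :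
    Ψ m n (algebraMap (R m n) (Rloc m n) p) = aeval (invGen m n) p :=
  IsLocalization.Away.lift_eq _ (aeval_invGen_x11_isUnit m n) _

@[simp]
lemma Ψ_algebraMap_X (p) : Ψ m n (algebraMap (R m n) (Rloc m n) (X p)) = invGen m n p :=
  (Ψ_algebraMap _).trans (aeval_X _ _)

lemma Φ_invSelf : Φ m n (IsLocalization.Away.invSelf (x11src m n)) = xinv m n := by
  have hx : Φ m n (algebraMap _ _ (x11src m n)) = algebraMap (R m n) (Rloc m n) (X (0, 0)) :=
    Φ_srcVar _
  exact map_invSelf_eq _ (by rw [hx]; exact IsLocalization.Away.mul_invSelf _)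

lemma Ψ_xinv : Ψ m n (xinv m n) = IsLocalization.Away.invSelf (x11src m n) := by
  have hx : Ψ m n (algebraMap (R m n) (Rloc m n) (X (0, 0))) =
      algebraMap _ (SrcLoc m n) (x11src m n) :=
    (Ψ_algebraMap _).trans (aeval_invGen_x11 m n)
  exact map_invSelf_eq _ (by rw [hx]; exact IsLocalization.Away.mul_invSelf _)

variable (m n)

lemma Φ_comp_Ψ : (Φ m n).comp (Ψ m n) = RingHom.id (Rloc m n) := by
  refine IsLocalization.ringHom_ext (Submonoid.powers (X (0, 0) : R m n))
    (MvPolynomial.ringHom_ext (fun k => by simp) fun ⟨i, j⟩ => ?_)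
  simp only [RingHom.comp_apply, Ψ_algebraMap_X, RingHom.id_apply]
  induction i using Fin.cases <;> induction j using Fin.cases <;>
    simp [invGen, srcGen, Φ_invSelf, Ymat]

lemma Ψ_comp_Φ : (Ψ m n).comp (Φ m n) = RingHom.id (SrcLoc m n) := by
  refine IsLocalization.ringHom_ext (Submonoid.powers (x11src m n))
    (MvPolynomial.ringHom_ext (fun k => by simp) fun σ => ?_)
  change Ψ m n (Φ m n (srcVar m n σ)) = srcVar m n σ
  rcases σ with ⟨i, j⟩ | i | j
  · simp [srcGen, Ymat, Ψ_xinv, invGen]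
  · induction i using Fin.cases <;> simp [srcGen, invGen]
  · simp [srcGen, invGen]

end Inverse

theorem invert_entry_general (m n t : ℕ) (ht : 1 ≤ t) :
    Function.Bijective (Φ m n) ∧
    Ideal.map (algebraMap (R m n) (Rloc m n)) (minorsIdeal t (Xmat m n)) =
      minorsIdeal (t - 1) (Ymat m n) := by
  obtain ⟨s, rfl⟩ := Nat.exists_eq_add_of_le' ht
  exact ⟨Function.bijective_iff_has_inverse.mpr
    ⟨Ψ m n, RingHom.congr_fun (Ψ_comp_Φ m n), RingHom.congr_fun (Φ_comp_Ψ m n)⟩,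
    map_minorsIdeal_Xmat m n s⟩

/-- Lemma 4.1: the map `ℤ[Y][x₁₁, …, x_{m1}, x₁₂, …, x₁ₙ]_{x₁₁} → R_{x₁₁}` sending
`y_{ij} ↦ x_{ij} - x_{i1}x_{1j}/x_{11}` (and the first-row/first-column variables to
themselves) is a ring isomorphism, and under it the extended ideal `I_t(X)R_{x₁₁}` of
size-`t` minors of `X` equals the ideal `I_{t-1}(Y)R_{x₁₁}` of size-`(t-1)` minors
of `Y`. -/
theorem invert_entry (m n t : ℕ) (ht : 1 ≤ t) (htm : t ≤ m + 1) (htn : t ≤ n + 1) :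
    Function.Bijective (Φ m n) ∧
    Ideal.map (algebraMap (R m n) (Rloc m n)) (minorsIdeal t (Xmat m n)) =
      minorsIdeal (t - 1) (Ymat m n) :=
  invert_entry_general m n t ht

end Stmt18

end Stmt18
end
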